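/- Let μ and σ be location and scale functionals on univariate measures and suppose that for the empirical measure ν̂ of a dataset of n points in ℝ^d, the quantities μ(ν̃_u) and σ(ν̃_u) are finite and σ(ν̃_u) > 0 uniformly over directions u and over all measures ν̃ differing from ν̂ in at most k rows, whenever k/n is below both breakdown points BP(μ, ν̂) and BP(σ, ν̂). Then for every finite τ, the level set {x : O(x, ν̃) ≤ τ} is bounded for all such ν̃, and hence the breakdown point of the exponential mechanism EM supported on {O(·,ν̃) ≤ τ} satisfies BP(EM, ν̂) ≥ min(BP(μ, ν̂), BP(σ, ν̂)). -/
import Mathlib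


open MeasureTheory RealInnerProductSpace

noncomputable section
open scoped Classical

variable {d n : ℕ}

/-- The empirical measure of a dataset of `n` points in `ℝ^d`. -/
def empMeasure (X : Fin n → EuclideanSpace ℝ (Fin d)) : Measure (EuclideanSpace ℝ (Fin d)) :=
  (n : ENNReal)⁻¹ • ∑ i, Measure.dirac (X i)

/-- The projection of the empirical measure of `X` onto direction `u`. -/
def empProj (X : Fin n → EuclideanSpace ℝ (Fin d)) (u : EuclideanSpace ℝ (Fin d)) :
    Measure ℝ := (empMeasure X).map (fun y => ⟪y, u⟫)

/-- `Y` differs from `X` in at most `k` rows. -/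
def DiffLE (X Y : Fin n → EuclideanSpace ℝ (Fin d)) (k : ℕ) : Prop :=
  (Finset.univ.filter (fun i => X i ≠ Y i)).card ≤ k

/-- The generic finite-sample breakdown point: the supremum of the fractions `m/n` such that
every dataset differing from `X` in at most `m` rows satisfies the predicate `good`. -/
def BP (good : (Fin n → EuclideanSpace ℝ (Fin d)) → Prop)
    (X : Fin n → EuclideanSpace ℝ (Fin d)) : ℝ :=
  sSup {r : ℝ | ∃ m : ℕ, m ≤ n ∧ r = (m : ℝ) / n ∧ ∀ Y, DiffLE X Y m → good Y}

/-- `μ` does not break down at the dataset `Y`: the projected locations are uniformly bounded. -/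
def locGood (μ : Measure ℝ → ℝ) (Y : Fin n → EuclideanSpace ℝ (Fin d)) : Prop :=
  ∃ C : ℝ, ∀ u : Metric.sphere (0 : EuclideanSpace ℝ (Fin d)) 1,
    |μ (empProj Y (u : EuclideanSpace ℝ (Fin d)))| ≤ C

/-- `σ` does not break down at the dataset `Y`: the projected scales are uniformly bounded
above and uniformly bounded away from `0`. -/
def scaleGood (σ : Measure ℝ → ℝ) (Y : Fin n → EuclideanSpace ℝ (Fin d)) : Prop :=
  ∃ c C : ℝ, 0 < c ∧ ∀ u : Metric.sphere (0 : EuclideanSpace ℝ (Fin d)) 1,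
    c ≤ σ (empProj Y (u : EuclideanSpace ℝ (Fin d))) ∧
    σ (empProj Y (u : EuclideanSpace ℝ (Fin d))) ≤ C

/-- The `τ`-level set of the sample outlyingness at dataset `Y`. -/
def outLevelSet (μ σ : Measure ℝ → ℝ) (Y : Fin n → EuclideanSpace ℝ (Fin d)) (τ : ℝ) :
    Set (EuclideanSpace ℝ (Fin d)) :=
  {x | ∀ u : Metric.sphere (0 : EuclideanSpace ℝ (Fin d)) 1,
    |⟪x, (u : EuclideanSpace ℝ (Fin d))⟫ - μ (empProj Y (u : EuclideanSpace ℝ (Fin d)))| ≤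
      τ * σ (empProj Y (u : EuclideanSpace ℝ (Fin d)))}

lemma bounded_of_good (hd : 0 < d) (μ σ : Measure ℝ → ℝ)
    {Y : Fin n → EuclideanSpace ℝ (Fin d)}
    (hloc : locGood μ Y) (hscale : scaleGood σ Y) {τ : ℝ} (hτ : 0 < τ) :
    Bornology.IsBounded (outLevelSet μ σ Y τ) := by
  obtain ⟨C, hC⟩ := hloc
  obtain ⟨c, C', hc, hcC⟩ := hscale
  -- a point on the unit sphere, to show the bounds are nonnegative
  have hsph : ∃ u : EuclideanSpace ℝ (Fin d), u ∈ Metric.sphere (0 : EuclideanSpace ℝ (Fin d)) 1 := by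
    refine ⟨EuclideanSpace.single (⟨0, hd⟩ : Fin d) (1 : ℝ), ?_⟩
    simp [mem_sphere_iff_norm, EuclideanSpace.norm_single]
  obtain ⟨u0, hu0⟩ := hsph
  have hC0 : 0 ≤ C := le_trans (abs_nonneg _) (hC ⟨u0, hu0⟩)
  have hC' : 0 < C' := lt_of_lt_of_le hc (le_trans (hcC ⟨u0, hu0⟩).1 (hcC ⟨u0, hu0⟩).2)
  have hR : (0:ℝ) ≤ C + τ * C' := by positivity
  apply Bornology.IsBounded.subset (Metric.isBounded_closedBall (x := (0 : EuclideanSpace ℝ (Fin d))) (r := C + τ * C'))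
  intro x hx
  rw [Metric.mem_closedBall, dist_zero_right]
  rcases eq_or_ne x 0 with rfl | hx0
  · simpa using hR
  · have hxn : ‖x‖ ≠ 0 := norm_ne_zero_iff.mpr hx0
    set u : EuclideanSpace ℝ (Fin d) := ‖x‖⁻¹ • x with hu_def
    have hu : u ∈ Metric.sphere (0 : EuclideanSpace ℝ (Fin d)) 1 := by
      simp [hu_def, mem_sphere_iff_norm, norm_smul, abs_of_nonneg (inv_nonneg.mpr (norm_nonneg x)),
        inv_mul_cancel₀ hxn]
    have hinner : ⟪x, u⟫ = ‖x‖ := by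
      rw [hu_def, real_inner_smul_right, real_inner_self_eq_norm_sq]
      field_simp
    have hx' := hx ⟨u, hu⟩
    simp only [Subtype.coe_mk] at hx'
    rw [hinner] at hx'
    have hσ := hcC ⟨u, hu⟩
    have h1 : |‖x‖ - μ (empProj Y u)| ≤ τ * C' :=
      le_trans hx' (by nlinarith [hσ.1, hσ.2])
    have h2 : |μ (empProj Y u)| ≤ C := hC ⟨u, hu⟩
    calc ‖x‖ = (‖x‖ - μ (empProj Y u)) + μ (empProj Y u) := by ring
      _ ≤ |‖x‖ - μ (empProj Y u)| + |μ (empProj Y u)| :=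
          add_le_add (le_abs_self _) (le_abs_self _)
      _ ≤ τ * C' + C := add_le_add h1 h2
      _ = C + τ * C' := by ring

/-- Breakdown of the private projection-depth-based median: if the projected locations and
scales remain uniformly bounded (with scales bounded away from zero) over all datasets
differing from `X` in at most `k` rows whenever `k/n` is below both breakdown points, then
for every finite `τ > 0` the support `{O(·, ν̃) ≤ τ}` of the exponential mechanism is
bounded for all such contaminated datasets, and hence
`BP(EM, ν̂) ≥ min(BP(μ, ν̂), BP(σ, ν̂))`. -/
theorem EM_breakdown_point (hd : 0 < d) (hn : 0 < n)
    (μ σ : Measure ℝ → ℝ) (X : Fin n → EuclideanSpace ℝ (Fin d))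
    (hrobust : ∀ k : ℕ, (k : ℝ) / n < min (BP (locGood μ) X) (BP (scaleGood σ) X) →
      ∀ Y, DiffLE X Y k → locGood μ Y ∧ scaleGood σ Y) :
    (∀ τ : ℝ, 0 < τ → ∀ k : ℕ,
      (k : ℝ) / n < min (BP (locGood μ) X) (BP (scaleGood σ) X) →
      ∀ Y, DiffLE X Y k → Bornology.IsBounded (outLevelSet μ σ Y τ)) ∧
    (∀ τ : ℝ, 0 < τ →
      min (BP (locGood μ) X) (BP (scaleGood σ) X) ≤
        BP (fun Y => Bornology.IsBounded (outLevelSet μ σ Y τ)) X) := by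
  constructor
  · intro τ hτ k hk Y hY
    obtain ⟨hloc, hscale⟩ := hrobust k hk Y hY
    exact bounded_of_good hd μ σ hloc hscale hτ
  · intro τ hτ
    set A := {r : ℝ | ∃ m : ℕ, m ≤ n ∧ r = (m : ℝ) / n ∧ ∀ Y, DiffLE X Y m → locGood μ Y}
    set B := {r : ℝ | ∃ m : ℕ, m ≤ n ∧ r = (m : ℝ) / n ∧ ∀ Y, DiffLE X Y m → scaleGood σ Y}
    set Cs := {r : ℝ | ∃ m : ℕ, m ≤ n ∧ r = (m : ℝ) / n ∧
      ∀ Y, DiffLE X Y m → Bornology.IsBounded (outLevelSet μ σ Y τ)}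
    have hfin : ∀ S : Set ℝ, S ⊆ {r : ℝ | ∃ m : ℕ, m ≤ n ∧ r = (m : ℝ) / n} → S.Finite := by
      intro S hS
      apply Set.Finite.subset (Set.Finite.image (fun m : ℕ => (m : ℝ) / n) (Set.finite_Iic n))
      intro r hr
      obtain ⟨m, hm, hrm⟩ := hS hr
      exact ⟨m, hm, hrm.symm⟩
    have hAfin : A.Finite := hfin A (fun r ⟨m, hm, hrm, _⟩ => ⟨m, hm, hrm⟩)
    have hBfin : B.Finite := hfin B (fun r ⟨m, hm, hrm, _⟩ => ⟨m, hm, hrm⟩)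
    have hCbdd : BddAbove Cs := by
      refine ⟨1, fun r hr => ?_⟩
      obtain ⟨m, hm, hrm, _⟩ := hr
      rw [hrm]
      rw [div_le_one (by exact_mod_cast hn)]
      exact_mod_cast hm
    have hCnonneg : ∀ r ∈ Cs, (0:ℝ) ≤ r := by
      intro r hr
      obtain ⟨m, hm, hrm, _⟩ := hr
      rw [hrm]; positivity
    rcases Set.eq_empty_or_nonempty A with hA | hA
    · have : BP (locGood μ) X = 0 := by
        unfold BP; rw [show {r : ℝ | ∃ m : ℕ, m ≤ n ∧ r = (m : ℝ) / n ∧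
          ∀ Y, DiffLE X Y m → locGood μ Y} = A from rfl, hA, Real.sSup_empty]
      rw [min_le_iff]; left; rw [this]
      exact Real.sSup_nonneg hCnonneg
    rcases Set.eq_empty_or_nonempty B with hB | hB
    · have : BP (scaleGood σ) X = 0 := by
        unfold BP; rw [show {r : ℝ | ∃ m : ℕ, m ≤ n ∧ r = (m : ℝ) / n ∧
          ∀ Y, DiffLE X Y m → scaleGood σ Y} = B from rfl, hB, Real.sSup_empty]
      rw [min_le_iff]; right; rw [this]
      exact Real.sSup_nonneg hCnonneg
    -- both nonempty: sSup is attained since the sets are finite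
    have hAmem : sSup A ∈ A := hA.csSup_mem hAfin
    have hBmem : sSup B ∈ B := hB.csSup_mem hBfin
    obtain ⟨mA, hmA, hrA, hgA⟩ := hAmem
    obtain ⟨mB, hmB, hrB, hgB⟩ := hBmem
    set m := min mA mB
    have hmem : ((m : ℝ) / n) ∈ Cs := by
      refine ⟨m, le_trans (min_le_left _ _) hmA, rfl, fun Y hY => ?_⟩
      have hYA : DiffLE X Y mA := le_trans hY (by exact_mod_cast min_le_left mA mB)
      have hYB : DiffLE X Y mB := le_trans hY (by exact_mod_cast min_le_right mA mB)
      exact bounded_of_good hd μ σ (hgA Y hYA) (hgB Y hYB) hτ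
    have hmin : min (BP (locGood μ) X) (BP (scaleGood σ) X) = (m : ℝ) / n := by
      show min (sSup A) (sSup B) = _
      rw [hrA, hrB]
      rcases le_total mA mB with h | h
      · rw [min_eq_left (by apply div_le_div_of_nonneg_right (by exact_mod_cast h) (by positivity)),
          show m = mA from min_eq_left h]
      · rw [min_eq_right (by apply div_le_div_of_nonneg_right (by exact_mod_cast h) (by positivity)),
          show m = mB from min_eq_right h]
    rw [hmin]
    exact le_csSup hCbdd hmem

end
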